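/- arXiv:1910.02348 — 7 statements merged into one kernel-verified Lean document; each statement's English description precedes it below -/
import Mathlib

section
/- Let y and z be {0,1}-valued random variables and x a random vector such that z is conditionally independent of x given y. Let ρ₀ = P(z=1 | y=0) and ρ₁ = P(z=0 | y=1). Then E[z | x] = (1 - ρ₁ - ρ₀) · E[y | x] + ρ₀. -/
/-!
Conditioning on the binary variable `y` gives `E[z | y] = (a₁ - a₀) y + a₀` with `aᵢ` the average
of `z` on `{y = i}`; for binary `z` these averages are `a₀ = ρ₀` and `a₁ = 1 - ρ₁`. Conditional
independence and the tower property give `E[z | x] = E[E[z | x, y] | x] = E[E[z | y] | x]`, and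
linearity of `E[· | x]` applied to the affine function of `y` finishes the proof.
-/

open MeasureTheory

section ZeroOneValued

variable {Ω : Type*} {y : Ω → ℝ}

lemma disjoint_setOf_eq_zero_setOf_eq_one :
    Disjoint {ω | y ω = 0} {ω | y ω = 1} :=
  Set.disjoint_left.2 fun _ h0 h1 => zero_ne_one (h0.symm.trans h1)

variable [MeasurableSpace Ω] {μ : Measure Ω}

lemma integrable_of_mem_zero_one [IsFiniteMeasure μ] (hy : Measurable y)
    (hy01 : ∀ ω, y ω = 0 ∨ y ω = 1) : Integrable y μ :=
  Integrable.of_bound hy.aestronglyMeasurable 1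
    (ae_of_all _ fun ω => by rcases hy01 ω with h | h <;> simp [h])

lemma setIntegral_eq_measureReal_inter_of_mem_zero_one (hy : Measurable y)
    (hy01 : ∀ ω, y ω = 0 ∨ y ω = 1) (s : Set Ω) :
    ∫ ω in s, y ω ∂μ = μ.real (s ∩ {ω | y ω = 1}) := by
  have hm1 : MeasurableSet {ω | y ω = 1} := hy (measurableSet_singleton 1)
  have hy_eq : ∫ ω in s, y ω ∂μ = ∫ ω in s, {ω | y ω = 1}.indicator 1 ω ∂μ :=
    integral_congr_ae (ae_of_all _ fun ω => by rcases hy01 ω with h | h <;> simp [h])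
  rw [hy_eq, setIntegral_indicator hm1]
  simp

lemma setAverage_eq_measureReal_inter_div_of_mem_zero_one (hy : Measurable y)
    (hy01 : ∀ ω, y ω = 0 ∨ y ω = 1) (s : Set Ω) :
    ⨍ ω in s, y ω ∂μ = μ.real ({ω | y ω = 1} ∩ s) / μ.real s := by
  rw [setAverage_eq, setIntegral_eq_measureReal_inter_of_mem_zero_one hy hy01, smul_eq_mul,
    Set.inter_comm, inv_mul_eq_div]

lemma setAverage_eq_one_sub_measureReal_inter_div_of_mem_zero_one [IsFiniteMeasure μ]
    (hy : Measurable y) (hy01 : ∀ ω, y ω = 0 ∨ y ω = 1) {s : Set Ω} (hs : μ s ≠ 0) :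
    ⨍ ω in s, y ω ∂μ = 1 - μ.real ({ω | y ω = 0} ∩ s) / μ.real s := by
  have hdiff : s \ {ω | y ω = 1} = {ω | y ω = 0} ∩ s := by
    ext ω; rcases hy01 ω with h | h <;> simp [h, and_comm]
  have hsplit : μ.real ({ω | y ω = 1} ∩ s) + μ.real ({ω | y ω = 0} ∩ s) = μ.real s := by
    have hm1 : MeasurableSet {ω | y ω = 1} := hy (measurableSet_singleton 1)
    rw [← hdiff, Set.inter_comm, measureReal_inter_add_sdiff hm1]
  have hs' : μ.real s ≠ 0 := (measureReal_ne_zero_iff (measure_ne_top μ s)).2 hs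
  rw [setAverage_eq_measureReal_inter_div_of_mem_zero_one hy hy01, eq_sub_iff_add_eq,
    ← add_div, hsplit, div_self hs']

lemma setIntegral_preimage_eq_of_mem_zero_one (hy : Measurable y)
    (hy01 : ∀ ω, y ω = 0 ∨ y ω = 1) {f g : Ω → ℝ} (hf : Integrable f μ) (hg : Integrable g μ)
    (h0 : ∫ ω in {ω | y ω = 0}, f ω ∂μ = ∫ ω in {ω | y ω = 0}, g ω ∂μ)
    (h1 : ∫ ω in {ω | y ω = 1}, f ω ∂μ = ∫ ω in {ω | y ω = 1}, g ω ∂μ) (t : Set ℝ) :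
    ∫ ω in y ⁻¹' t, f ω ∂μ = ∫ ω in y ⁻¹' t, g ω ∂μ := by
  have hm1 : MeasurableSet {ω | y ω = 1} := hy (measurableSet_singleton 1)
  by_cases h0t : (0 : ℝ) ∈ t <;> by_cases h1t : (1 : ℝ) ∈ t
  · have ht : y ⁻¹' t = {ω | y ω = 0} ∪ {ω | y ω = 1} := by
      ext ω; rcases hy01 ω with h | h <;> simp [h, h0t, h1t]
    rw [ht, setIntegral_union disjoint_setOf_eq_zero_setOf_eq_one hm1 hf.integrableOn
      hf.integrableOn, setIntegral_union disjoint_setOf_eq_zero_setOf_eq_one hm1 hg.integrableOn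
      hg.integrableOn, h0, h1]
  · have ht : y ⁻¹' t = {ω | y ω = 0} := by
      ext ω; rcases hy01 ω with h | h <;> simp [h, h0t, h1t]
    rwa [ht]
  · have ht : y ⁻¹' t = {ω | y ω = 1} := by
      ext ω; rcases hy01 ω with h | h <;> simp [h, h0t, h1t]
    rwa [ht]
  · have ht : y ⁻¹' t = ∅ := by
      ext ω; rcases hy01 ω with h | h <;> simp [h, h0t, h1t]
    simp [ht]

lemma condExp_comap_of_mem_zero_one [IsFiniteMeasure μ] (hy : Measurable y)
    (hy01 : ∀ ω, y ω = 0 ∨ y ω = 1) {z : Ω → ℝ} (hz : Integrable z μ) :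
    μ[z | MeasurableSpace.comap y inferInstance] =ᵐ[μ] fun ω =>
      ((⨍ ω in {ω | y ω = 1}, z ω ∂μ) - ⨍ ω in {ω | y ω = 0}, z ω ∂μ) * y ω
        + ⨍ ω in {ω | y ω = 0}, z ω ∂μ := by
  set a₀ := ⨍ ω in {ω | y ω = 0}, z ω ∂μ
  set a₁ := ⨍ ω in {ω | y ω = 1}, z ω ∂μ
  have hy' : Measurable[MeasurableSpace.comap y inferInstance] y := comap_measurable y
  have hg : Integrable (fun ω => (a₁ - a₀) * y ω + a₀) μ :=
    ((integrable_of_mem_zero_one hy hy01).const_mul _).add (integrable_const _)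
  have hg_on (i : ℝ) (a : ℝ) (ha : a = (a₁ - a₀) * i + a₀) :
      ∫ ω in {ω | y ω = i}, (a₁ - a₀) * y ω + a₀ ∂μ = ∫ ω in {ω | y ω = i}, a ∂μ :=
    setIntegral_congr_fun (hy (measurableSet_singleton i)) fun ω hω => by
      rw [ha, show y ω = i from hω]
  refine (ae_eq_condExp_of_forall_setIntegral_eq hy.comap_le hz (fun _ _ _ => hg.integrableOn) ?_
    ((hy'.const_mul _).add_const _).aestronglyMeasurable).symm
  rintro _ ⟨t, -, rfl⟩ -
  refine setIntegral_preimage_eq_of_mem_zero_one hy hy01 hg hz ?_ ?_ t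
  · rw [hg_on 0 a₀ (by ring), setIntegral_setAverage]
  · rw [hg_on 1 a₁ (by ring), setIntegral_setAverage]

end ZeroOneValued

lemma condExp_mul_add_const {Ω : Type*} {m m₀ : MeasurableSpace Ω} {μ : Measure Ω}
    [IsFiniteMeasure μ] (hm : m ≤ m₀) {f : Ω → ℝ} (hf : Integrable f μ) (b c : ℝ) :
    μ[fun ω => b * f ω + c | m] =ᵐ[μ] fun ω => b * μ[f | m] ω + c := by
  refine (condExp_add (hf.const_mul b) (integrable_const c) m).trans ?_
  filter_upwards [condExp_smul (μ := μ) b f m] with ω hω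
  simp only [Pi.add_apply, condExp_const hm]
  exact congrArg (· + c) hω

theorem stmt0_general {Ω E : Type*} [MeasurableSpace Ω] [MeasurableSpace E]
    (μ : Measure Ω) [IsProbabilityMeasure μ]
    (x : Ω → E) (y z : Ω → ℝ)
    (hx : Measurable x) (hy : Measurable y) (hz : Measurable z)
    (hy01 : ∀ ω, y ω = 0 ∨ y ω = 1) (hz01 : ∀ ω, z ω = 0 ∨ z ω = 1)
    (hy1 : μ {ω | y ω = 1} ≠ 0)
    (hCI : μ[z | MeasurableSpace.comap (fun ω => (x ω, y ω)) inferInstance]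
      =ᵐ[μ] μ[z | MeasurableSpace.comap y inferInstance])
    (ρ₀ ρ₁ : ℝ)
    (hρ₀ : ρ₀ = (μ ({ω | z ω = 1} ∩ {ω | y ω = 0})).toReal / (μ {ω | y ω = 0}).toReal)
    (hρ₁ : ρ₁ = (μ ({ω | z ω = 0} ∩ {ω | y ω = 1})).toReal / (μ {ω | y ω = 1}).toReal) :
    μ[z | MeasurableSpace.comap x inferInstance]
      =ᵐ[μ] fun ω => (1 - ρ₁ - ρ₀) * (μ[y | MeasurableSpace.comap x inferInstance]) ω + ρ₀ := by
  have hσ : MeasurableSpace.comap x inferInstance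
      ≤ MeasurableSpace.comap (fun ω => (x ω, y ω)) inferInstance :=
    le_sup_left.trans (MeasurableSpace.comap_prodMk x y).ge
  have ha₀ : ⨍ ω in {ω | y ω = 0}, z ω ∂μ = ρ₀ := by
    rw [setAverage_eq_measureReal_inter_div_of_mem_zero_one hz hz01, hρ₀]
    rfl
  have ha₁ : ⨍ ω in {ω | y ω = 1}, z ω ∂μ = 1 - ρ₁ := by
    rw [setAverage_eq_one_sub_measureReal_inter_div_of_mem_zero_one hz hz01 hy1, hρ₁]
    rfl
  calc μ[z | MeasurableSpace.comap x inferInstance]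
      =ᵐ[μ] μ[μ[z | MeasurableSpace.comap (fun ω => (x ω, y ω)) inferInstance]
        | MeasurableSpace.comap x inferInstance] :=
        (condExp_condExp_of_le hσ (hx.prodMk hy).comap_le).symm
    _ =ᵐ[μ] μ[μ[z | MeasurableSpace.comap y inferInstance]
        | MeasurableSpace.comap x inferInstance] :=
        condExp_congr_ae hCI
    _ =ᵐ[μ] μ[fun ω => (1 - ρ₁ - ρ₀) * y ω + ρ₀ | MeasurableSpace.comap x inferInstance] := by
        refine condExp_congr_ae ?_
        have hEz := condExp_comap_of_mem_zero_one hy hy01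
          (integrable_of_mem_zero_one (μ := μ) hz hz01)
        rwa [ha₀, ha₁] at hEz
    _ =ᵐ[μ] _ := condExp_mul_add_const hx.comap_le (integrable_of_mem_zero_one hy hy01) _ _

/-- Let `y, z` be `{0,1}`-valued random variables and `x` a random vector such
that `z` is conditionally independent of `x` given `y` (i.e. `E[z | σ(x,y)] = E[z | σ(y)]`
a.s.).  With `ρ₀ = P(z=1 | y=0)` and `ρ₁ = P(z=0 | y=1)`, we have
`E[z | x] = (1 - ρ₁ - ρ₀)·E[y | x] + ρ₀` a.s. -/
theorem stmt0 {Ω E : Type*} [MeasurableSpace Ω] [MeasurableSpace E]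
    (μ : Measure Ω) [IsProbabilityMeasure μ]
    (x : Ω → E) (y z : Ω → ℝ)
    (hx : Measurable x) (hy : Measurable y) (hz : Measurable z)
    (hy01 : ∀ ω, y ω = 0 ∨ y ω = 1) (hz01 : ∀ ω, z ω = 0 ∨ z ω = 1)
    (hy0 : μ {ω | y ω = 0} ≠ 0) (hy1 : μ {ω | y ω = 1} ≠ 0)
    (hCI : μ[z | MeasurableSpace.comap (fun ω => (x ω, y ω)) inferInstance]
      =ᵐ[μ] μ[z | MeasurableSpace.comap y inferInstance])
    (ρ₀ ρ₁ : ℝ)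
    (hρ₀ : ρ₀ = (μ ({ω | z ω = 1} ∩ {ω | y ω = 0})).toReal / (μ {ω | y ω = 0}).toReal)
    (hρ₁ : ρ₁ = (μ ({ω | z ω = 0} ∩ {ω | y ω = 1})).toReal / (μ {ω | y ω = 1}).toReal) :
    μ[z | MeasurableSpace.comap x inferInstance]
      =ᵐ[μ] fun ω => (1 - ρ₁ - ρ₀) * (μ[y | MeasurableSpace.comap x inferInstance]) ω + ρ₀ :=
  stmt0_general μ x y z hx hy hz hy01 hz01 hy1 hCI ρ₀ ρ₁ hρ₀ hρ₁
end

section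
/- Let M, N ⊆ ℝⁿ be linear subspaces and A ∈ ℝ^{n×n} an invertible matrix. Define δ(M,N) := sup over unit vectors u ∈ M of inf over v ∈ N of ‖u−v‖₂, and A(M) := {Av : v ∈ M}. Then δ(A(M), A(N)) ≤ κ(A) · δ(M, N), where κ(A) = σ_max(A)/σ_min(A) is the condition number of A. -/
/-!
Write a unit vector of `A(M)` as `A w` with `w ∈ M`. Distances to `N` scale linearly along the
ray through `w`, so `dist(w, N) ≤ ‖w‖ δ(M,N) ≤ ‖A⁻¹‖ δ(M,N)`, and applying `A` to a near-best
approximation of `w` in `N` multiplies the distance by at most `‖A‖`.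
-/

open scoped BigOperators

/-- The one-sided gap `δ(M,N) = sup_{u ∈ M, ‖u‖=1} inf_{v ∈ N} ‖u − v‖` between two
subspaces (with the convention that the supremum over the empty set is `0`). -/
noncomputable def gapδ {E : Type*} [NormedAddCommGroup E] [InnerProductSpace ℝ E]
    (M N : Submodule ℝ E) : ℝ :=
  ⨆ u : {u : E // u ∈ M ∧ ‖u‖ = 1}, ⨅ v : N, ‖(u : E) - (v : E)‖

open Metric Pointwise

section NormedSpace

variable {𝕜 E F : Type*} [NontriviallyNormedField 𝕜] [NormedAddCommGroup E] [NormedSpace 𝕜 E]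
  [NormedAddCommGroup F] [NormedSpace 𝕜 F]

theorem Submodule.infDist_smul (N : Submodule 𝕜 E) (c : 𝕜) (x : E) :
    infDist (c • x) N = ‖c‖ * infDist x N := by
  rcases eq_or_ne c 0 with rfl | hc
  · simp [infDist_zero_of_mem N.zero_mem]
  have hN : c • (N : Set E) = N := by
    ext y
    simp [Set.mem_smul_set_iff_inv_smul_mem₀ hc, Submodule.smul_mem_iff _ (inv_ne_zero hc)]
  rw [← infDist_smul₀ hc, hN]

theorem Submodule.infDist_map_le (f : E →L[𝕜] F) (N : Submodule 𝕜 E) (x : E) :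
    infDist (f x) (N.map (f : E →ₗ[𝕜] F)) ≤ ‖f‖ * infDist x N := by
  rw [infDist_eq_iInf (s := (N : Set E)), Real.mul_iInf_of_nonneg (norm_nonneg f)]
  refine le_ciInf fun ⟨y, hy⟩ => ?_
  calc infDist (f x) (N.map (f : E →ₗ[𝕜] F)) ≤ dist (f x) (f y) :=
        infDist_le_dist_of_mem ⟨y, hy, rfl⟩
    _ = ‖f (x - y)‖ := by rw [dist_eq_norm, map_sub]
    _ ≤ ‖f‖ * dist x y := by rw [dist_eq_norm]; exact f.le_opNorm _

end NormedSpace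

section InnerProductSpace

variable {E F : Type*} [NormedAddCommGroup E] [InnerProductSpace ℝ E]
  [NormedAddCommGroup F] [InnerProductSpace ℝ F]

theorem gapδ_eq_iSup_infDist (M N : Submodule ℝ E) :
    gapδ M N = ⨆ u : {u : E // u ∈ M ∧ ‖u‖ = 1}, infDist (u : E) N := by
  simp only [gapδ, infDist_eq_iInf, dist_eq_norm]
  rfl

theorem gapδ_nonneg (M N : Submodule ℝ E) : 0 ≤ gapδ M N := by
  rw [gapδ_eq_iSup_infDist]
  exact Real.iSup_nonneg fun _ => infDist_nonneg

theorem infDist_le_gapδ {M N : Submodule ℝ E} {u : E} (hu : u ∈ M) (hu1 : ‖u‖ = 1) :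
    infDist u N ≤ gapδ M N := by
  rw [gapδ_eq_iSup_infDist]
  refine le_ciSup (f := fun u : {u : E // u ∈ M ∧ ‖u‖ = 1} => infDist (u : E) N)
    ⟨1, ?_⟩ ⟨u, hu, hu1⟩
  rintro _ ⟨⟨v, -, hv1⟩, rfl⟩
  simpa [hv1] using infDist_le_dist_of_mem (x := v) N.zero_mem

theorem infDist_le_norm_mul_gapδ {M N : Submodule ℝ E} {u : E} (hu : u ∈ M) :
    infDist u N ≤ ‖u‖ * gapδ M N := by
  rcases eq_or_ne u 0 with rfl | hu0
  · simp [infDist_zero_of_mem N.zero_mem]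
  have hunit : ‖‖u‖⁻¹ • u‖ = 1 := by
    rw [norm_smul, norm_inv, norm_norm, inv_mul_cancel₀ (norm_ne_zero_iff.mpr hu0)]
  calc infDist u N = ‖u‖ * infDist (‖u‖⁻¹ • u) N := by
        rw [N.infDist_smul, norm_inv, norm_norm, mul_inv_cancel_left₀ (norm_ne_zero_iff.mpr hu0)]
    _ ≤ ‖u‖ * gapδ M N := by gcongr; exact infDist_le_gapδ (M.smul_mem _ hu) hunit

theorem gapδ_map_le (A : E ≃L[ℝ] F) (M N : Submodule ℝ E) :
    gapδ (M.map (A : E →ₗ[ℝ] F)) (N.map (A : E →ₗ[ℝ] F))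
      ≤ ‖(A : E →L[ℝ] F)‖ * ‖(A.symm : F →L[ℝ] E)‖ * gapδ M N := by
  have hδ := gapδ_nonneg M N
  rw [gapδ_eq_iSup_infDist]
  refine Real.iSup_le ?_ (by positivity)
  rintro ⟨_, ⟨w, hw, rfl⟩, hu1⟩
  replace hu1 : ‖A w‖ = 1 := hu1
  have hw_le : ‖w‖ ≤ ‖(A.symm : F →L[ℝ] E)‖ := by
    simpa [hu1] using (A.symm : F →L[ℝ] E).le_opNorm (A w)
  calc infDist (A w) (N.map (A : E →ₗ[ℝ] F)) ≤ ‖(A : E →L[ℝ] F)‖ * infDist w N :=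
        N.infDist_map_le (A : E →L[ℝ] F) w
    _ ≤ ‖(A : E →L[ℝ] F)‖ * (‖w‖ * gapδ M N) := by gcongr; exact infDist_le_norm_mul_gapδ hw
    _ ≤ ‖(A : E →L[ℝ] F)‖ * (‖(A.symm : F →L[ℝ] E)‖ * gapδ M N) := by gcongr
    _ = ‖(A : E →L[ℝ] F)‖ * ‖(A.symm : F →L[ℝ] E)‖ * gapδ M N := by ring

end InnerProductSpace

/-- The invertible matrix `A` is a continuous linear equivalence of `ℝⁿ`, and
`κ(A) = σ_max(A)/σ_min(A) = ‖A‖·‖A⁻¹‖` in operator norms. -/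
theorem stmt2 {n : ℕ}
    (A : EuclideanSpace ℝ (Fin n) ≃L[ℝ] EuclideanSpace ℝ (Fin n))
    (M N : Submodule ℝ (EuclideanSpace ℝ (Fin n))) :
    gapδ (M.map (A : EuclideanSpace ℝ (Fin n) →ₗ[ℝ] EuclideanSpace ℝ (Fin n)))
        (N.map (A : EuclideanSpace ℝ (Fin n) →ₗ[ℝ] EuclideanSpace ℝ (Fin n)))
      ≤ ‖(A : EuclideanSpace ℝ (Fin n) →L[ℝ] EuclideanSpace ℝ (Fin n))‖ *
          ‖(A.symm : EuclideanSpace ℝ (Fin n) →L[ℝ] EuclideanSpace ℝ (Fin n))‖ *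
          gapδ M N :=
  gapδ_map_le A M N
end

section
/- Let X ∈ ℝ^{n×p} have full column rank, and let W_y, W_z ∈ ℝ^{n×n} be positive definite diagonal matrices. Define I_ℓ := Xᵀ W_y W_z^{-1} W_y X / n and I_s := (Xᵀ W_y X)(Xᵀ W_z X)^{-1}(Xᵀ W_y X) / n. Then I_ℓ − I_s is positive semi-definite. -/
open Matrix
open scoped BigOperators

lemma aux_inj {n p : ℕ} (X : Matrix (Fin n) (Fin p) ℝ) (hX : X.rank = p) :
    Function.Injective X.mulVec := by
  have h := LinearMap.finrank_range_add_finrank_ker X.mulVecLin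
  rw [show Module.finrank ℝ (LinearMap.range X.mulVecLin) = X.rank from rfl, hX] at h
  simp only [Module.finrank_fintype_fun_eq_card, Fintype.card_fin] at h
  have hker : LinearMap.ker X.mulVecLin = ⊥ :=
    Submodule.finrank_eq_zero.mp (by omega)
  exact LinearMap.ker_eq_bot.mp hker

lemma aux_posdef {n p : ℕ} (X : Matrix (Fin n) (Fin p) ℝ) (hX : X.rank = p)
    (dz : Fin n → ℝ) (hdz : ∀ i, 0 < dz i) :
    (Xᵀ * Matrix.diagonal dz * X).PosDef := by
  have hinj := aux_inj X hX
  have hdzd : (Matrix.diagonal dz).PosDef := Matrix.posDef_diagonal_iff.mpr hdz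
  refine Matrix.PosDef.of_dotProduct_mulVec_pos ?_ ?_
  · have hc : Xᴴ = Xᵀ := by
      ext i j; simp [Matrix.conjTranspose_apply]
    rw [← hc]
    exact Matrix.isHermitian_conjTranspose_mul_mul X hdzd.1
  · intro x hx
    have hXx : X *ᵥ x ≠ 0 := by
      intro h
      exact hx (hinj (by simp [h]))
    have h2 := hdzd.dotProduct_mulVec_pos hXx
    have key : star x ⬝ᵥ (Xᵀ * Matrix.diagonal dz * X) *ᵥ x
        = star (X *ᵥ x) ⬝ᵥ Matrix.diagonal dz *ᵥ (X *ᵥ x) := by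
      show x ⬝ᵥ _ = (X *ᵥ x) ⬝ᵥ _
      rw [← Matrix.mulVec_mulVec, ← Matrix.mulVec_mulVec, Matrix.dotProduct_mulVec x,
        Matrix.vecMul_transpose]
    rw [key]
    exact h2

lemma aux_smul_psd {p : ℕ} (c : ℝ) (hc : 0 ≤ c) {M : Matrix (Fin p) (Fin p) ℝ}
    (hM : M.PosSemidef) : (c • M).PosSemidef := by
  refine Matrix.PosSemidef.of_dotProduct_mulVec_nonneg ?_ (fun x => ?_)
  · unfold Matrix.IsHermitian
    rw [Matrix.conjTranspose_smul, hM.1]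
    simp
  · rw [Matrix.smul_mulVec, dotProduct_smul, smul_eq_mul]
    exact mul_nonneg hc (hM.dotProduct_mulVec_nonneg x)

lemma aux_herm {n p : ℕ} (X : Matrix (Fin n) (Fin p) ℝ) (d : Fin n → ℝ) :
    (Xᵀ * Matrix.diagonal d * X)ᴴ = Xᵀ * Matrix.diagonal d * X := by
  have hc : Xᴴ = Xᵀ := by ext i j; simp [Matrix.conjTranspose_apply]
  rw [← hc]
  exact Matrix.isHermitian_conjTranspose_mul_mul X
    (Matrix.isHermitian_diagonal_of_self_adjoint d (by ext i; simp))

lemma aux_ct {a b : Type*} [Fintype a] [Fintype b] (M : Matrix a b ℝ) : Mᴴ = Mᵀ := by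
  ext i j; simp [Matrix.conjTranspose_apply]

/-- let `X ∈ ℝ^{n×p}` have full column rank and let `W_y, W_z` be positive
definite diagonal matrices.  With `I_ℓ = Xᵀ W_y W_z⁻¹ W_y X / n` and
`I_s = (Xᵀ W_y X)(Xᵀ W_z X)⁻¹(Xᵀ W_y X) / n`, the difference `I_ℓ − I_s` is
positive semi-definite. -/
theorem stmt3 {n p : ℕ} (X : Matrix (Fin n) (Fin p) ℝ) (hX : X.rank = p)
    (dy dz : Fin n → ℝ) (hdy : ∀ i, 0 < dy i) (hdz : ∀ i, 0 < dz i) :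
    (((1 : ℝ) / n) •
      (Xᵀ * Matrix.diagonal dy * (Matrix.diagonal dz)⁻¹ * Matrix.diagonal dy * X -
        Xᵀ * Matrix.diagonal dy * X * (Xᵀ * Matrix.diagonal dz * X)⁻¹ *
          (Xᵀ * Matrix.diagonal dy * X))).PosSemidef := by
  set Dy := Matrix.diagonal dy with hDy
  set Dz := Matrix.diagonal dz with hDz
  have hDzinv : Dz⁻¹ = Matrix.diagonal (fun i => (dz i)⁻¹) := by
    apply Matrix.inv_eq_right_inv
    rw [hDz, Matrix.diagonal_mul_diagonal]
    rw [show (fun i => dz i * (dz i)⁻¹) = fun _ => (1:ℝ) from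
      funext fun i => mul_inv_cancel₀ (hdz i).ne']
    exact Matrix.diagonal_one
  have hzz : Dz * Dz⁻¹ = 1 := by
    rw [hDz, hDzinv, Matrix.diagonal_mul_diagonal]
    rw [show (fun i => dz i * (dz i)⁻¹) = fun _ => (1:ℝ) from
      funext fun i => mul_inv_cancel₀ (hdz i).ne']
    exact Matrix.diagonal_one
  have hzz' : Dz⁻¹ * Dz = 1 := by
    rw [hDz, hDzinv, Matrix.diagonal_mul_diagonal]
    rw [show (fun i => (dz i)⁻¹ * dz i) = fun _ => (1:ℝ) from
      funext fun i => inv_mul_cancel₀ (hdz i).ne']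
    exact Matrix.diagonal_one
  have hDzD : Dz.PosDef := Matrix.posDef_diagonal_iff.mpr hdz
  have hA : (Xᵀ * Dz * X).PosDef := aux_posdef X hX dz hdz
  haveI : Invertible (Xᵀ * Dz * X) := hA.isUnit.invertible
  have hB : (Xᵀ * Dy * X)ᴴ = Xᵀ * Dy * X := aux_herm X dy
  set C : Matrix (Fin n) (Fin p ⊕ Fin p) ℝ := Matrix.fromCols X (Dz⁻¹ * Dy * X) with hC
  have hherm : (Dz⁻¹ * Dy * X)ᵀ = Xᵀ * Dy * Dz⁻¹ := by
    rw [Matrix.transpose_mul, Matrix.transpose_mul, hDy, hDzinv,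
      Matrix.diagonal_transpose, Matrix.diagonal_transpose, Matrix.mul_assoc]
  have hblocks : Cᴴ * Dz * C =
      Matrix.fromBlocks (Xᵀ * Dz * X) (Xᵀ * Dy * X) (Xᵀ * Dy * X)ᴴ
        (Xᵀ * Dy * Dz⁻¹ * Dy * X) := by
    rw [hB, hC, aux_ct,
      Matrix.transpose_fromCols, Matrix.fromRows_mul, Matrix.fromRows_mul_fromCols,
      hherm]
    simp only [← Matrix.mul_assoc]
    have e2 : Xᵀ * Dz * Dz⁻¹ = Xᵀ := by
      rw [Matrix.mul_assoc, hzz, Matrix.mul_one]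
    have e1 : Xᵀ * Dy * Dz⁻¹ * Dz = Xᵀ * Dy := by
      rw [Matrix.mul_assoc (Xᵀ * Dy) Dz⁻¹ Dz, hzz', Matrix.mul_one]
    rw [e2, e1]
  have hbig : (Matrix.fromBlocks (Xᵀ * Dz * X) (Xᵀ * Dy * X) (Xᵀ * Dy * X)ᴴ
      (Xᵀ * Dy * Dz⁻¹ * Dy * X)).PosSemidef := by
    rw [← hblocks]
    exact hDzD.posSemidef.conjTranspose_mul_mul_same C
  have hschur := (Matrix.PosDef.fromBlocks₁₁ (Xᵀ * Dy * X)
    (Xᵀ * Dy * Dz⁻¹ * Dy * X) hA).mp hbig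
  rw [hB] at hschur
  exact aux_smul_psd _ (by positivity) hschur
end

section
/- Let μ(t) = eᵗ/(1+eᵗ) be the logistic function and let 0 ≤ ρ₀, ρ₁ with ρ₀ + ρ₁ < 1. Set a = 1−ρ₁−ρ₀, b = ρ₀ and define h(t) = log((aμ(t)+b)/(1−aμ(t)−b)). Then 0 ≤ h′(t) ≤ 1 for all t ∈ ℝ. -/
/-- The logistic (sigmoid) function `μ(t) = eᵗ/(1+eᵗ)`. -/
noncomputable def logistic (t : ℝ) : ℝ := Real.exp t / (1 + Real.exp t)

/-- The label-noise function `h = (A')⁻¹ ∘ g_LN⁻¹`, with `a = 1-ρ₁-ρ₀`, `b = ρ₀`: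
`h(t) = log((a·μ(t)+b)/(1-a·μ(t)-b))`. -/
noncomputable def hLN (ρ₀ ρ₁ : ℝ) (t : ℝ) : ℝ :=
  Real.log (((1 - ρ₁ - ρ₀) * logistic t + ρ₀) / (1 - (1 - ρ₁ - ρ₀) * logistic t - ρ₀))

lemma logistic_pos (t : ℝ) : 0 < logistic t := by
  unfold logistic; positivity

lemma logistic_lt_one (t : ℝ) : logistic t < 1 := by
  unfold logistic
  rw [div_lt_one (by positivity)]
  linarith [Real.exp_pos t]

lemma hasDerivAt_logistic (t : ℝ) :
    HasDerivAt logistic (logistic t * (1 - logistic t)) t := by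
  have h1 : (1 : ℝ) + Real.exp t ≠ 0 := by positivity
  have h := ((Real.hasDerivAt_exp t).div
    ((hasDerivAt_const t (1:ℝ)).add (Real.hasDerivAt_exp t)) h1)
  refine h.congr_deriv ?_
  unfold logistic
  simp only [Pi.add_apply]
  field_simp
  ring

/-- with `0 ≤ ρ₀, ρ₁` and `ρ₀ + ρ₁ < 1`, the derivative of the label-noise
link composition `h` satisfies `0 ≤ h′(t) ≤ 1` for all `t`. -/
theorem stmt5 (ρ₀ ρ₁ : ℝ) (h0 : 0 ≤ ρ₀) (h1 : 0 ≤ ρ₁) (hsum : ρ₀ + ρ₁ < 1) (t : ℝ) :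
    0 ≤ deriv (hLN ρ₀ ρ₁) t ∧ deriv (hLN ρ₀ ρ₁) t ≤ 1 := by
  set a : ℝ := 1 - ρ₁ - ρ₀ with ha
  have hapos : 0 < a := by simp [ha]; linarith
  -- positivity of numerator and denominator at every point
  have hu : ∀ s : ℝ, 0 < a * logistic s + ρ₀ := fun s =>
    add_pos_of_pos_of_nonneg (mul_pos hapos (logistic_pos s)) h0
  have hv : ∀ s : ℝ, 0 < 1 - a * logistic s - ρ₀ := by
    intro s
    have h2 : a * logistic s < a := by
      nlinarith [logistic_lt_one s, logistic_pos s]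
    simp only [ha] at h2 ⊢
    linarith
  -- rewrite hLN as a difference of logs
  have hfun : hLN ρ₀ ρ₁ = fun s =>
      Real.log (a * logistic s + ρ₀) - Real.log (1 - a * logistic s - ρ₀) := by
    funext s
    unfold hLN
    rw [Real.log_div (ne_of_gt (hu s)) (ne_of_gt (hv s))]
  set μ := logistic t with hμ
  have hμd := hasDerivAt_logistic t
  have hud : HasDerivAt (fun s => a * logistic s + ρ₀) (a * (μ * (1 - μ))) t :=
    (hμd.const_mul a).add_const ρ₀
  have hvd : HasDerivAt (fun s => 1 - a * logistic s - ρ₀) (-(a * (μ * (1 - μ)))) t := by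
    have := ((hμd.const_mul a).const_sub 1).sub_const ρ₀
    convert this using 1
  have hlogu := hud.log (ne_of_gt (hu t))
  have hlogv := hvd.log (ne_of_gt (hv t))
  have hD : HasDerivAt (hLN ρ₀ ρ₁)
      (a * (μ * (1 - μ)) / (a * logistic t + ρ₀) -
        -(a * (μ * (1 - μ))) / (1 - a * logistic t - ρ₀)) t := by
    rw [hfun]
    exact hlogu.sub hlogv
  rw [hD.deriv]
  set u := a * logistic t + ρ₀ with hu'
  set v := 1 - a * logistic t - ρ₀ with hv'
  have hut : 0 < u := hu t
  have hvt : 0 < v := hv t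
  have hμ0 : 0 < μ := logistic_pos t
  have hμ1 : μ < 1 := logistic_lt_one t
  constructor
  · have h3 : 0 ≤ a * (μ * (1 - μ)) :=
      mul_nonneg hapos.le (mul_nonneg hμ0.le (by linarith))
    have := div_nonneg h3 hut.le
    have := div_nonneg h3 hvt.le
    rw [neg_div]
    linarith
  · -- key inequality: a μ (1-μ) ≤ u v
    have hkey : a * (μ * (1 - μ)) ≤ u * v := by
      rw [hu', hv', ← hμ]
      rcases eq_or_lt_of_le (add_nonneg h0 h1) with hc | hc
      · have hρ0 : ρ₀ = 0 := by linarith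
        have hρ1 : ρ₁ = 0 := by linarith
        rw [ha, hρ0, hρ1]
        ring_nf
        nlinarith [sq_nonneg μ]
      · rw [ha]
        nlinarith [mul_nonneg (by linarith : (0:ℝ) ≤ 1 - ρ₁ - ρ₀)
            (sq_nonneg ((ρ₀ + ρ₁) * μ - ρ₀)), mul_nonneg h0 h1,
          mul_pos hc (mul_pos hμ0 (sub_pos.mpr hμ1))]
    have heq : a * (μ * (1 - μ)) / u - -(a * (μ * (1 - μ))) / v
        = a * (μ * (1 - μ)) * (u + v) / (u * v) := by
      field_simp
      ring
    have huv : u + v = 1 := by rw [hu', hv']; ring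
    rw [heq, huv, mul_one, div_le_one (by positivity)]
    exact hkey
end

section
/- Let 𝓛: ℝᵖ → ℝ be differentiable, β₀ ∈ ℝᵖ with support S of size s₀, and suppose the restricted strong convexity condition ⟨∇𝓛(β) − ∇𝓛(β₀), β−β₀⟩ ≥ α‖β−β₀‖₂² − τ√(log p/n)‖β−β₀‖₁ holds for all β in a feasible set Ω containing β₀. Let β̃ ∈ Ω satisfy the first-order stationarity condition ⟨∇𝓛(β̃) + λv, β₀ − β̃⟩ ≥ 0 for some v ∈ ∂‖β̃‖₁, where λ ≥ 4·max{‖∇𝓛(β₀)‖_∞, τ√(log p/n)}. Then ‖β̃−β₀‖₂ ≤ (3/2)·√s₀·λ/α and ‖β̃−β₀‖₁ ≤ 6 s₀ λ/α. -/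
/-!
Write `Δ = β̃ - β₀` and split `‖Δ‖₁ = a + b` into its parts on the support `S` of `β₀` and off it.
Stationarity and the subgradient inequality bound `⟪∇𝓛(β̃), Δ⟫` by `λ(‖β₀‖₁ - ‖β̃‖₁) ≤ λ(a - b)`;
restricted strong convexity, Hölder for `⟪∇𝓛(β₀), Δ⟫` and the choice of `λ` then give
`α‖Δ‖₂² ≤ λ(a - b) + (λ/2)(a + b)`. This forces the cone condition `b ≤ 3a`, and together with
`a ≤ √s₀ ‖Δ‖₂` (Cauchy–Schwarz on `S`) it yields both error bounds.
-/

open scoped BigOperators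
open RealInnerProductSpace

/-- The ℓ¹ norm of a vector in `ℝᵖ`. -/
noncomputable def norm1 {p : ℕ} (v : EuclideanSpace ℝ (Fin p)) : ℝ := ∑ i, |v i|

/-- The ℓ∞ norm of a vector in `ℝᵖ`. -/
noncomputable def normInf {p : ℕ} (v : EuclideanSpace ℝ (Fin p)) : ℝ := ⨆ i, |v i|

section Norms

variable {p : ℕ}

lemma norm1_nonneg (x : EuclideanSpace ℝ (Fin p)) : 0 ≤ norm1 x :=
  Finset.sum_nonneg fun i _ => abs_nonneg (x i)

lemma norm1_eq_sum_add_sum_compl (S : Finset (Fin p)) (x : EuclideanSpace ℝ (Fin p)) :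
    norm1 x = ∑ i ∈ S, |x i| + ∑ i ∈ Sᶜ, |x i| :=
  (Finset.sum_add_sum_compl S _).symm

lemma abs_inner_le_normInf_mul_norm1 (g x : EuclideanSpace ℝ (Fin p)) :
    |⟪g, x⟫| ≤ normInf g * norm1 x := by
  have hbdd : BddAbove (Set.range fun j => |g j|) := (Set.finite_range _).bddAbove
  have hinner : ⟪g, x⟫ = ∑ i, g i * x i := by
    simp [PiLp.inner_apply, mul_comm]
  rw [hinner, norm1, normInf, Finset.mul_sum]
  refine (Finset.abs_sum_le_sum_abs _ _).trans (Finset.sum_le_sum fun i _ => ?_)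
  rw [abs_mul]
  exact mul_le_mul_of_nonneg_right (le_ciSup hbdd i) (abs_nonneg _)

lemma norm1_sub_norm1_le_sum_sub_sum_compl (S : Finset (Fin p))
    {β₀ : EuclideanSpace ℝ (Fin p)} (hS : ∀ i ∉ S, β₀ i = 0) (β : EuclideanSpace ℝ (Fin p)) :
    norm1 β₀ - norm1 β ≤ ∑ i ∈ S, |(β - β₀) i| - ∑ i ∈ Sᶜ, |(β - β₀) i| := by
  rw [norm1, norm1, ← Finset.sum_sub_distrib, ← Finset.sum_add_sum_compl S, sub_eq_add_neg,
    ← Finset.sum_neg_distrib]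
  gcongr with i _ i hi
  · rw [PiLp.sub_apply, abs_sub_comm]
    exact abs_sub_abs_le_abs_sub _ _
  · simp [hS i (Finset.mem_compl.mp hi)]

end Norms

lemma sum_abs_le_sqrt_card_mul_norm {ι : Type*} [Fintype ι] (S : Finset ι)
    (x : EuclideanSpace ℝ ι) : ∑ i ∈ S, |x i| ≤ Real.sqrt S.card * ‖x‖ := by
  have hsq : (∑ i ∈ S, |x i|) ^ 2 ≤ (S.card : ℝ) * ‖x‖ ^ 2 := by
    calc (∑ i ∈ S, |x i|) ^ 2 ≤ (S.card : ℝ) * ∑ i ∈ S, |x i| ^ 2 :=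
          sq_sum_le_card_mul_sum_sq (s := S) (f := fun i => |x i|)
      _ ≤ (S.card : ℝ) * ∑ i, |x i| ^ 2 := by
        gcongr
        exact S.subset_univ
      _ = S.card * ‖x‖ ^ 2 := by
        rw [EuclideanSpace.norm_eq, Real.sq_sqrt (by positivity)]
        simp
  rw [← Real.sqrt_sq (norm_nonneg x), ← Real.sqrt_mul (Nat.cast_nonneg _)]
  exact Real.le_sqrt_of_sq_le hsq

lemma mul_sq_norm_sub_le_of_stationary {p : ℕ} {α κ lam : ℝ} (hlam : 0 ≤ lam)
    {β₀ βt g₀ gt v : EuclideanSpace ℝ (Fin p)}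
    (hRSC : ⟪gt - g₀, βt - β₀⟫ ≥ α * ‖βt - β₀‖ ^ 2 - κ * norm1 (βt - β₀))
    (hv : norm1 β₀ - norm1 βt ≥ ⟪v, β₀ - βt⟫)
    (hstat : ⟪gt + lam • v, β₀ - βt⟫ ≥ 0) :
    α * ‖βt - β₀‖ ^ 2 ≤
      lam * (norm1 β₀ - norm1 βt) + (normInf g₀ + κ) * norm1 (βt - β₀) := by
  have hswap : β₀ - βt = -(βt - β₀) := (neg_sub _ _).symm
  rw [hswap, inner_neg_right] at hv hstat
  rw [inner_add_left, real_inner_smul_left] at hstat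
  rw [inner_sub_left] at hRSC
  have hHolder := (neg_le_abs _).trans (abs_inner_le_normInf_mul_norm1 g₀ (βt - β₀))
  have hsub := mul_le_mul_of_nonneg_left hv hlam
  linarith

lemma le_and_add_le_of_mul_sq_le {α lam a b x c : ℝ} (hα : 0 < α) (hlam : 0 < lam)
    (hb : 0 ≤ b) (hx : 0 ≤ x) (hc : 0 ≤ c) (hax : a ≤ c * x)
    (hbasic : α * x ^ 2 ≤ lam * (a - b) + lam / 2 * (a + b)) :
    x ≤ 3 / 2 * c * lam / α ∧ a + b ≤ 6 * c ^ 2 * lam / α := by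
  have hx_le : x ≤ 3 / 2 * c * lam / α := by
    rw [le_div_iff₀ hα]
    rcases hx.eq_or_lt with rfl | hx_pos
    · rw [zero_mul]; positivity
    · refine le_of_mul_le_mul_right ?_ hx_pos
      nlinarith
  have hcone : b ≤ 3 * a := by nlinarith
  refine ⟨hx_le, ?_⟩
  calc a + b ≤ 4 * (c * x) := by linarith
    _ ≤ 4 * (c * (3 / 2 * c * lam / α)) := by gcongr
    _ = 6 * c ^ 2 * lam / α := by ring

theorem stmt11_general {p : ℕ} (n : ℕ)
    (L : EuclideanSpace ℝ (Fin p) → ℝ)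
    (Ω : Set (EuclideanSpace ℝ (Fin p)))
    (β₀ : EuclideanSpace ℝ (Fin p))
    (α τ lam : ℝ) (hα : 0 < α) (hlam : 0 < lam)
    (s₀ : ℕ) (hs₀ : s₀ = (Finset.univ.filter fun i => β₀ i ≠ 0).card)
    (hRSC : ∀ β ∈ Ω,
      ⟪gradient L β - gradient L β₀, β - β₀⟫
        ≥ α * ‖β - β₀‖ ^ 2 - τ * Real.sqrt (Real.log p / n) * norm1 (β - β₀))
    (βt : EuclideanSpace ℝ (Fin p)) (hβt : βt ∈ Ω)
    (v : EuclideanSpace ℝ (Fin p))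
    (hv : ∀ w, norm1 w - norm1 βt ≥ ⟪v, w - βt⟫)
    (hstat : ⟪gradient L βt + lam • v, β₀ - βt⟫ ≥ 0)
    (hlam_ge : lam ≥ 4 * max (normInf (gradient L β₀)) (τ * Real.sqrt (Real.log p / n))) :
    ‖βt - β₀‖ ≤ (3 / 2) * Real.sqrt s₀ * lam / α ∧
      norm1 (βt - β₀) ≤ 6 * s₀ * lam / α := by
  set S := Finset.univ.filter fun i => β₀ i ≠ 0
  subst hs₀
  have hS : ∀ i ∉ S, β₀ i = 0 := by simp [S]
  set κ := τ * Real.sqrt (Real.log p / n)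
  have hweights : normInf (gradient L β₀) + κ ≤ lam / 2 := by
    have := le_max_left (normInf (gradient L β₀)) κ
    have := le_max_right (normInf (gradient L β₀)) κ
    linarith
  have hbasic : α * ‖βt - β₀‖ ^ 2 ≤ lam * (norm1 β₀ - norm1 βt) + lam / 2 * norm1 (βt - β₀) :=
    (mul_sq_norm_sub_le_of_stationary hlam.le (hRSC βt hβt) (hv β₀) hstat).trans <|
      add_le_add_right (mul_le_mul_of_nonneg_right hweights (norm1_nonneg _)) _
  have hdecomp := mul_le_mul_of_nonneg_left (norm1_sub_norm1_le_sum_sub_sum_compl S hS βt) hlam.le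
  rw [norm1_eq_sum_add_sum_compl S (βt - β₀)] at hbasic ⊢
  set a := ∑ i ∈ S, |(βt - β₀) i|
  set b := ∑ i ∈ Sᶜ, |(βt - β₀) i|
  have hsplit : α * ‖βt - β₀‖ ^ 2 ≤ lam * (a - b) + lam / 2 * (a + b) := by linarith
  obtain ⟨hl2, hl1⟩ := le_and_add_le_of_mul_sq_le hα hlam
    (Finset.sum_nonneg fun i _ => abs_nonneg _) (norm_nonneg _) (Real.sqrt_nonneg _)
    (sum_abs_le_sqrt_card_mul_norm S (βt - β₀)) hsplit
  rw [Real.sq_sqrt (Nat.cast_nonneg _)] at hl1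
  exact ⟨hl2, hl1⟩

/-- ℓ₁/ℓ₂ error bounds for a stationary point of a penalized (possibly
non-convex) program under the restricted strong convexity condition with tolerance
`τ√(log p/n)·‖·‖₁`.  Here `v` is a subgradient of `‖·‖₁` at `β̃`, and
`λ ≥ 4·max{‖∇𝓛(β₀)‖_∞, τ√(log p/n)}`.  Then `‖β̃−β₀‖₂ ≤ (3/2)√s₀ λ/α` and
`‖β̃−β₀‖₁ ≤ 6 s₀ λ/α`. -/
theorem stmt11 {p : ℕ} (n : ℕ) (hn : 0 < n) (hp : 0 < p)
    (L : EuclideanSpace ℝ (Fin p) → ℝ) (hL : Differentiable ℝ L)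
    (Ω : Set (EuclideanSpace ℝ (Fin p)))
    (β₀ : EuclideanSpace ℝ (Fin p)) (hβ₀Ω : β₀ ∈ Ω)
    (α τ lam : ℝ) (hα : 0 < α) (hτ : 0 < τ) (hlam : 0 < lam)
    (s₀ : ℕ) (hs₀ : s₀ = (Finset.univ.filter fun i => β₀ i ≠ 0).card)
    (hRSC : ∀ β ∈ Ω,
      ⟪gradient L β - gradient L β₀, β - β₀⟫
        ≥ α * ‖β - β₀‖ ^ 2 - τ * Real.sqrt (Real.log p / n) * norm1 (β - β₀))
    (βt : EuclideanSpace ℝ (Fin p)) (hβt : βt ∈ Ω)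
    (v : EuclideanSpace ℝ (Fin p))
    (hv : ∀ w, norm1 w - norm1 βt ≥ ⟪v, w - βt⟫)
    (hstat : ⟪gradient L βt + lam • v, β₀ - βt⟫ ≥ 0)
    (hlam_ge : lam ≥ 4 * max (normInf (gradient L β₀)) (τ * Real.sqrt (Real.log p / n))) :
    ‖βt - β₀‖ ≤ (3 / 2) * Real.sqrt s₀ * lam / α ∧
      norm1 (βt - β₀) ≤ 6 * s₀ * lam / α :=
  stmt11_general n L Ω β₀ α τ lam hα hlam s₀ hs₀ hRSC βt hβt v hv hstat hlam_ge
end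

section
/- Let 𝓛_n: ℝᵖ → ℝ be continuously differentiable and suppose ⟨∇𝓛_n(β₀ + Δ) − ∇𝓛_n(β₀), Δ⟩ ≥ α‖Δ‖₂² − τ(log p/n)‖Δ‖₁² for all Δ with ‖Δ‖₂ ≤ δ. Then for every β with β − β₀ in the set 𝕊 = {Δ : ‖Δ_{S^c}‖₁ ≤ 3‖Δ_S‖₁, ‖Δ‖₂ ≤ δ} (where |S| = s₀), provided n ≥ (32τ s₀/α) log p, we have 𝓛_n(β) − 𝓛_n(β₀) − ⟨∇𝓛_n(β₀), β−β₀⟩ ≥ (α/4)‖β−β₀‖₂². -/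
open scoped BigOperators
open RealInnerProductSpace

/-- if `𝓛ₙ` is `C¹` and satisfies the restricted strong convexity condition
`⟨∇𝓛ₙ(β₀+Δ) − ∇𝓛ₙ(β₀), Δ⟩ ≥ α‖Δ‖₂² − τ(log p/n)‖Δ‖₁²` for all `‖Δ‖₂ ≤ δ`, then for every
`β` with `β−β₀` in the cone `{Δ : ‖Δ_{Sᶜ}‖₁ ≤ 3‖Δ_S‖₁, ‖Δ‖₂ ≤ δ}` (with `|S| = s₀`), and
provided `n ≥ (32τs₀/α)·log p`, one has
`𝓛ₙ(β) − 𝓛ₙ(β₀) − ⟨∇𝓛ₙ(β₀), β−β₀⟩ ≥ (α/4)‖β−β₀‖₂²`. -/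
theorem stmt14 {p : ℕ} (n s₀ : ℕ) (hn : 0 < n) (hp : 0 < p)
    (L : EuclideanSpace ℝ (Fin p) → ℝ) (hL : ContDiff ℝ 1 L)
    (β₀ : EuclideanSpace ℝ (Fin p))
    (α τ δ : ℝ) (hα : 0 < α) (hτ : 0 < τ) (hδ : 0 < δ)
    (S : Finset (Fin p)) (hS : S.card = s₀)
    (hRSC : ∀ Δ : EuclideanSpace ℝ (Fin p), ‖Δ‖ ≤ δ →
      ⟪gradient L (β₀ + Δ) - gradient L β₀, Δ⟫
        ≥ α * ‖Δ‖ ^ 2 - τ * (Real.log p / n) * (norm1 Δ) ^ 2)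
    (hsample : (n : ℝ) ≥ (32 * τ * s₀ / α) * Real.log p)
    (β : EuclideanSpace ℝ (Fin p))
    (hcone : ∑ i ∈ Sᶜ, |(β - β₀) i| ≤ 3 * ∑ i ∈ S, |(β - β₀) i|)
    (hball : ‖β - β₀‖ ≤ δ) :
    L β - L β₀ - ⟪gradient L β₀, β - β₀⟫ ≥ (α / 4) * ‖β - β₀‖ ^ 2 := by
  set Δ : EuclideanSpace ℝ (Fin p) := β - β₀ with hΔdef
  have hn' : (0:ℝ) < n := by exact_mod_cast hn
  have hlog : 0 ≤ Real.log p := Real.log_nonneg (by exact_mod_cast hp)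
  -- ℓ¹–ℓ² comparison on the cone
  have hsumsq : ∑ i ∈ S, (Δ i) ^ 2 ≤ ‖Δ‖ ^ 2 := by
    have : ‖Δ‖ ^ 2 = ∑ i, (Δ i) ^ 2 := by
      rw [EuclideanSpace.norm_eq, Real.sq_sqrt (by positivity)]
      simp [Real.norm_eq_abs, sq_abs]
    rw [this]
    exact Finset.sum_le_sum_of_subset_of_nonneg (Finset.subset_univ S)
      (fun i _ _ => sq_nonneg _)
  have hCS : (∑ i ∈ S, |Δ i|) ^ 2 ≤ s₀ * ‖Δ‖ ^ 2 := by
    have h1 : (∑ i ∈ S, |Δ i|) ^ 2 ≤ S.card * ∑ i ∈ S, |Δ i| ^ 2 :=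
      sq_sum_le_card_mul_sum_sq
    simp only [sq_abs] at h1
    rw [hS] at h1
    calc (∑ i ∈ S, |Δ i|) ^ 2 ≤ s₀ * ∑ i ∈ S, (Δ i) ^ 2 := h1
      _ ≤ s₀ * ‖Δ‖ ^ 2 := by
        exact mul_le_mul_of_nonneg_left hsumsq (by positivity)
  have hnorm1 : (norm1 Δ) ^ 2 ≤ 16 * s₀ * ‖Δ‖ ^ 2 := by
    have hsplit : norm1 Δ = (∑ i ∈ S, |Δ i|) + ∑ i ∈ Sᶜ, |Δ i| := by
      rw [norm1, ← Finset.sum_add_sum_compl S]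
    have hS1 : 0 ≤ ∑ i ∈ S, |Δ i| := Finset.sum_nonneg fun i _ => abs_nonneg _
    have hle : norm1 Δ ≤ 4 * ∑ i ∈ S, |Δ i| := by
      rw [hsplit]; linarith [hcone]
    have hn1 : 0 ≤ norm1 Δ := Finset.sum_nonneg fun i _ => abs_nonneg _
    calc (norm1 Δ) ^ 2 ≤ (4 * ∑ i ∈ S, |Δ i|) ^ 2 := by
          exact pow_le_pow_left₀ hn1 hle 2
      _ = 16 * (∑ i ∈ S, |Δ i|) ^ 2 := by ring
      _ ≤ 16 * (s₀ * ‖Δ‖ ^ 2) := by linarith [hCS]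
      _ = 16 * s₀ * ‖Δ‖ ^ 2 := by ring
  -- sample size condition
  have h32 : 32 * τ * s₀ * Real.log p ≤ α * n := by
    have h := mul_le_mul_of_nonneg_left hsample hα.le
    calc 32 * τ * s₀ * Real.log p = α * (32 * τ * s₀ / α * Real.log p) := by
          field_simp
      _ ≤ α * n := h
  have hpenalty : τ * (Real.log p / n) * (norm1 Δ) ^ 2 ≤ α / 2 * ‖Δ‖ ^ 2 := by
    have h1 : τ * (Real.log p / n) * (norm1 Δ) ^ 2
        ≤ τ * (Real.log p / n) * (16 * s₀ * ‖Δ‖ ^ 2) :=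
      mul_le_mul_of_nonneg_left hnorm1 (by positivity)
    have h2 : τ * (Real.log p / n) * (16 * s₀ * ‖Δ‖ ^ 2)
        = (32 * τ * s₀ * Real.log p) / n * (‖Δ‖ ^ 2 / 2) := by
      field_simp; ring
    have h3 : (32 * τ * s₀ * Real.log p) / n ≤ α := by
      rw [div_le_iff₀ hn']; linarith
    calc τ * (Real.log p / n) * (norm1 Δ) ^ 2
        ≤ (32 * τ * s₀ * Real.log p) / n * (‖Δ‖ ^ 2 / 2) := by rw [← h2]; exact h1
      _ ≤ α * (‖Δ‖ ^ 2 / 2) := by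
          exact mul_le_mul_of_nonneg_right h3 (by positivity)
      _ = α / 2 * ‖Δ‖ ^ 2 := by ring
  -- pointwise lower bound on the integrand
  have key : ∀ t ∈ Set.Icc (0:ℝ) 1,
      α / 2 * t * ‖Δ‖ ^ 2 ≤ ⟪gradient L (β₀ + t • Δ) - gradient L β₀, Δ⟫ := by
    rintro t ⟨ht0, ht1⟩
    rcases eq_or_lt_of_le ht0 with h0 | h0
    · simp [← h0]
    · have hnormt : ‖t • Δ‖ = t * ‖Δ‖ := by
        rw [norm_smul, Real.norm_eq_abs, abs_of_pos h0]
      have hball' : ‖t • Δ‖ ≤ δ := by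
        rw [hnormt]
        calc t * ‖Δ‖ ≤ 1 * ‖Δ‖ := by
              exact mul_le_mul_of_nonneg_right ht1 (norm_nonneg _)
          _ = ‖Δ‖ := one_mul _
          _ ≤ δ := hball
      have hR := hRSC (t • Δ) hball'
      have hn1t : norm1 (t • Δ) = t * norm1 Δ := by
        simp only [norm1]
        rw [Finset.mul_sum]
        refine Finset.sum_congr rfl fun i _ => ?_
        have : (t • Δ) i = t * Δ i := rfl
        rw [this, abs_mul, abs_of_pos h0]
      rw [real_inner_smul_right, hnormt, hn1t] at hR
      have hR' : t * ⟪gradient L (β₀ + t • Δ) - gradient L β₀, Δ⟫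
          ≥ t * (α * t * ‖Δ‖ ^ 2 - τ * (Real.log p / n) * t * (norm1 Δ) ^ 2) := by
        calc t * (α * t * ‖Δ‖ ^ 2 - τ * (Real.log p / n) * t * (norm1 Δ) ^ 2)
            = α * (t * ‖Δ‖) ^ 2 - τ * (Real.log p / n) * (t * norm1 Δ) ^ 2 := by ring
          _ ≤ t * ⟪gradient L (β₀ + t • Δ) - gradient L β₀, Δ⟫ := hR
      have hinner : ⟪gradient L (β₀ + t • Δ) - gradient L β₀, Δ⟫
          ≥ α * t * ‖Δ‖ ^ 2 - τ * (Real.log p / n) * t * (norm1 Δ) ^ 2 :=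
        le_of_mul_le_mul_left (by linarith [hR']) h0
      have hpen' : τ * (Real.log p / n) * t * (norm1 Δ) ^ 2 ≤ α / 2 * t * ‖Δ‖ ^ 2 := by
        have := mul_le_mul_of_nonneg_right hpenalty ht0
        calc τ * (Real.log p / n) * t * (norm1 Δ) ^ 2
            = τ * (Real.log p / n) * (norm1 Δ) ^ 2 * t := by ring
          _ ≤ α / 2 * ‖Δ‖ ^ 2 * t := this
          _ = α / 2 * t * ‖Δ‖ ^ 2 := by ring
      linarith
  -- differentiability along the segment
  have hdiff : Differentiable ℝ L := hL.differentiable one_ne_zero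
  have hderiv : ∀ t : ℝ,
      HasDerivAt (fun t => L (β₀ + t • Δ)) ⟪gradient L (β₀ + t • Δ), Δ⟫ t := by
    intro t
    have hline : HasDerivAt (fun t : ℝ => β₀ + t • Δ) Δ t := by
      simpa using ((hasDerivAt_id t).smul_const Δ).const_add β₀
    have hF := (hdiff (β₀ + t • Δ)).hasFDerivAt
    have hcomp := hF.comp_hasDerivAt t hline
    have heq : ⟪gradient L (β₀ + t • Δ), Δ⟫ = fderiv ℝ L (β₀ + t • Δ) Δ := by
      rw [gradient, InnerProductSpace.toDual_symm_apply]
    rw [heq]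
    exact hcomp
  -- continuity of the integrand
  have hgradcont : Continuous (gradient L) := by
    have hf : Continuous (fderiv ℝ L) := (contDiff_one_iff_fderiv.mp hL).2
    exact ((InnerProductSpace.toDual ℝ
      (EuclideanSpace ℝ (Fin p))).symm.continuous).comp hf
  have hcont : Continuous fun t : ℝ => ⟪gradient L (β₀ + t • Δ), Δ⟫ := by
    apply Continuous.inner
    · exact hgradcont.comp (continuous_const.add (continuous_id.smul continuous_const))
    · exact continuous_const
  -- fundamental theorem of calculus
  have hβ : β₀ + Δ = β := by rw [hΔdef]; abel
  have hFTC : ∫ t in (0:ℝ)..1, ⟪gradient L (β₀ + t • Δ), Δ⟫ = L β - L β₀ := by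
    have := intervalIntegral.integral_eq_sub_of_hasDerivAt
      (f := fun t => L (β₀ + t • Δ))
      (f' := fun t => ⟪gradient L (β₀ + t • Δ), Δ⟫)
      (fun t _ => hderiv t) (hcont.intervalIntegrable 0 1)
    simpa [hβ] using this
  have hconst : ∫ _t in (0:ℝ)..1, ⟪gradient L β₀, Δ⟫ = ⟪gradient L β₀, Δ⟫ := by
    simp
  have hsub : L β - L β₀ - ⟪gradient L β₀, Δ⟫
      = ∫ t in (0:ℝ)..1, ⟪gradient L (β₀ + t • Δ) - gradient L β₀, Δ⟫ := by
    rw [← hFTC, ← hconst, ← intervalIntegral.integral_sub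
      (hcont.intervalIntegrable 0 1) (intervalIntegrable_const)]
    congr 1
    funext t
    rw [inner_sub_left]
  have hcont2 : Continuous fun t : ℝ => ⟪gradient L (β₀ + t • Δ) - gradient L β₀, Δ⟫ := by
    apply Continuous.inner
    · exact (hgradcont.comp (continuous_const.add
        (continuous_id.smul continuous_const))).sub continuous_const
    · exact continuous_const
  have hmono : ∫ t in (0:ℝ)..1, α / 2 * t * ‖Δ‖ ^ 2
      ≤ ∫ t in (0:ℝ)..1, ⟪gradient L (β₀ + t • Δ) - gradient L β₀, Δ⟫ := by
    apply intervalIntegral.integral_mono_on (by norm_num)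
    · exact ((continuous_const.mul continuous_id).mul continuous_const).intervalIntegrable 0 1
    · exact hcont2.intervalIntegrable 0 1
    · exact key
  have hval : ∫ t in (0:ℝ)..1, α / 2 * t * ‖Δ‖ ^ 2 = α / 4 * ‖Δ‖ ^ 2 := by
    have : (fun t : ℝ => α / 2 * t * ‖Δ‖ ^ 2) = fun t : ℝ => α / 2 * ‖Δ‖ ^ 2 * t := by
      funext t; ring
    rw [this, intervalIntegral.integral_const_mul, integral_id]
    ring
  rw [ge_iff_le, ← hval, hsub]
  exact hmono
end

section
/- Let E = (1/n)Σᵢ eᵢ xᵢxᵢᵀ ∈ ℝ^{p×p} be symmetric and suppose sup over u ∈ B₀(s+s′) ∩ B₂(1) of |uᵀEu| ≤ ε, where B₀(k) is the set of k-sparse vectors and B₂(1) the unit Euclidean ball. If every u ∈ B₁(√s) ∩ B₂(1) lies in 3·conv(B₀(s) ∩ B₂(1)) (closure of the convex hull), and similarly for s′, then sup over u ∈ B₁(√s) ∩ B₂(1), v ∈ B₁(√s′) ∩ B₂(1) of |uᵀEv| ≤ (27/2)·ε. -/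
open Matrix
open scoped BigOperators Pointwise

/-- let `E = (1/n)Σᵢ eᵢxᵢxᵢᵀ` (a symmetric matrix), and suppose
`|uᵀEu| ≤ ε` for every `(s+s′)`-sparse `u` in the unit euclidean ball.  If every
`u ∈ B₁(√s) ∩ B₂(1)` lies in `3·conv(B₀(s) ∩ B₂(1))` (closure of the convex hull), and
similarly for `s′`, then `|uᵀEv| ≤ (27/2)ε` for all `u ∈ B₁(√s) ∩ B₂(1)` and
`v ∈ B₁(√s′) ∩ B₂(1)`. -/
theorem stmt19 {n p : ℕ} (e : Fin n → ℝ) (x : Fin n → Fin p → ℝ)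
    (E : Matrix (Fin p) (Fin p) ℝ)
    (hE : E = ((n : ℝ)⁻¹) • ∑ i, e i • Matrix.vecMulVec (x i) (x i))
    (s s' : ℕ) (ε : ℝ)
    (hsparse : ∀ u : Fin p → ℝ,
      (Finset.univ.filter fun i => u i ≠ 0).card ≤ s + s' →
      Real.sqrt (∑ i, u i ^ 2) ≤ 1 → |u ⬝ᵥ E.mulVec u| ≤ ε)
    (hconv : ∀ u : Fin p → ℝ, ∑ i, |u i| ≤ Real.sqrt s → Real.sqrt (∑ i, u i ^ 2) ≤ 1 →
      u ∈ (3 : ℝ) • closure (convexHull ℝ {v : Fin p → ℝ |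
        (Finset.univ.filter fun i => v i ≠ 0).card ≤ s ∧ Real.sqrt (∑ i, v i ^ 2) ≤ 1}))
    (hconv' : ∀ v : Fin p → ℝ, ∑ i, |v i| ≤ Real.sqrt s' → Real.sqrt (∑ i, v i ^ 2) ≤ 1 →
      v ∈ (3 : ℝ) • closure (convexHull ℝ {w : Fin p → ℝ |
        (Finset.univ.filter fun i => w i ≠ 0).card ≤ s' ∧ Real.sqrt (∑ i, w i ^ 2) ≤ 1})) :
    ∀ u v : Fin p → ℝ,
      ∑ i, |u i| ≤ Real.sqrt s → Real.sqrt (∑ i, u i ^ 2) ≤ 1 →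
      ∑ i, |v i| ≤ Real.sqrt s' → Real.sqrt (∑ i, v i ^ 2) ≤ 1 →
      |u ⬝ᵥ E.mulVec v| ≤ (27 / 2) * ε := by
  have hε : 0 ≤ ε := by
    have h := hsparse 0 (by simp) (by simp)
    simpa using h
  -- symmetry of E
  have hT : Eᵀ = E := by
    subst hE
    ext i j
    simp [Matrix.transpose_apply, Matrix.sum_apply, Matrix.vecMulVec_apply, mul_comm]
  have hsymm : ∀ a b : Fin p → ℝ, a ⬝ᵥ E.mulVec b = b ⬝ᵥ E.mulVec a := by
    intro a b
    rw [Matrix.dotProduct_mulVec]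
    nth_rewrite 1 [← hT]
    rw [Matrix.vecMul_transpose, dotProduct_comm]
  -- quadratic bound with homogeneity
  have hQ : ∀ w : Fin p → ℝ, (Finset.univ.filter fun i => w i ≠ 0).card ≤ s + s' →
      |w ⬝ᵥ E.mulVec w| ≤ ε * ∑ i, w i ^ 2 := by
    intro w hw
    have hc2nn : (0:ℝ) ≤ ∑ i, w i ^ 2 := Finset.sum_nonneg fun i _ => sq_nonneg _
    rcases eq_or_lt_of_le hc2nn with h0 | hpos
    · have hw0 : w = 0 := by
        funext i
        have hz : w i ^ 2 = 0 :=
          (Finset.sum_eq_zero_iff_of_nonneg (fun i _ => sq_nonneg (w i))).mp h0.symm i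
            (Finset.mem_univ i)
        exact (pow_eq_zero_iff two_ne_zero).mp hz
      simp [hw0]
    · set c := Real.sqrt (∑ i, w i ^ 2) with hc
      have hcpos : 0 < c := Real.sqrt_pos.mpr hpos
      have hcsq : c ^ 2 = ∑ i, w i ^ 2 := Real.sq_sqrt hc2nn
      have hkey := hsparse (c⁻¹ • w) ?_ ?_
      · have hrw : (c⁻¹ • w) ⬝ᵥ E.mulVec (c⁻¹ • w) = c⁻¹ * (c⁻¹ * (w ⬝ᵥ E.mulVec w)) := by
          simp [smul_dotProduct, Matrix.mulVec_smul, dotProduct_smul,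
            smul_eq_mul]
        rw [hrw, abs_mul, abs_mul, abs_of_nonneg (by positivity : (0:ℝ) ≤ c⁻¹)] at hkey
        have h9 : |w ⬝ᵥ E.mulVec w| ≤ ε * c ^ 2 := by
          rw [pow_two]
          calc |w ⬝ᵥ E.mulVec w| = c * (c * (c⁻¹ * (c⁻¹ * |w ⬝ᵥ E.mulVec w|))) := by
                field_simp
          _ ≤ c * (c * ε) := by
                have := mul_le_mul_of_nonneg_left
                  (mul_le_mul_of_nonneg_left hkey hcpos.le) hcpos.le
                linarith [this]
          _ = ε * (c * c) := by ring
        rwa [hcsq] at h9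
      · have : (Finset.univ.filter fun i => (c⁻¹ • w) i ≠ 0) =
            (Finset.univ.filter fun i => w i ≠ 0) := by
          apply Finset.filter_congr
          intro i _
          simp [smul_eq_mul, mul_ne_zero_iff, inv_ne_zero hcpos.ne']
        rw [this]; exact hw
      · have : ∑ i, (c⁻¹ • w) i ^ 2 = c⁻¹ ^ 2 * ∑ i, w i ^ 2 := by
          rw [Finset.mul_sum]
          exact Finset.sum_congr rfl fun i _ => by simp [smul_eq_mul]; ring
        rw [this, ← hcsq]
        rw [show c⁻¹ ^ 2 * c ^ 2 = 1 by field_simp]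
        simp
  -- bound for sparse unit vectors
  have sqle : ∀ w : Fin p → ℝ, Real.sqrt (∑ i, w i ^ 2) ≤ 1 → ∑ i, w i ^ 2 ≤ 1 := by
    intro w h
    have hnn : (0:ℝ) ≤ ∑ i, w i ^ 2 := Finset.sum_nonneg fun i _ => sq_nonneg _
    nlinarith [Real.sq_sqrt hnn, Real.sqrt_nonneg (∑ i, w i ^ 2)]
  have hsupp : ∀ (a b : Fin p → ℝ),
      (Finset.univ.filter fun i => a i + b i ≠ 0).card ≤
        (Finset.univ.filter fun i => a i ≠ 0).card +
        (Finset.univ.filter fun i => b i ≠ 0).card := by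
    intro a b
    have hsub : (Finset.univ.filter fun i => a i + b i ≠ 0) ⊆
        (Finset.univ.filter fun i => a i ≠ 0) ∪ (Finset.univ.filter fun i => b i ≠ 0) := by
      intro i hi
      simp only [Finset.mem_filter, Finset.mem_union, Finset.mem_univ, true_and] at *
      by_contra h
      push_neg at h
      exact hi (by rw [h.1, h.2]; ring)
    exact le_trans (Finset.card_le_card hsub) (Finset.card_union_le _ _)
  have hpair : ∀ a b : Fin p → ℝ,
      (Finset.univ.filter fun i => a i ≠ 0).card ≤ s → Real.sqrt (∑ i, a i ^ 2) ≤ 1 →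
      (Finset.univ.filter fun i => b i ≠ 0).card ≤ s' → Real.sqrt (∑ i, b i ^ 2) ≤ 1 →
      |a ⬝ᵥ E.mulVec b| ≤ ε := by
    intro a b has han hbs hbn
    have ha2 := sqle a han
    have hb2 := sqle b hbn
    have hnegb : (Finset.univ.filter fun i => -b i ≠ 0) =
        (Finset.univ.filter fun i => b i ≠ 0) := by
      apply Finset.filter_congr; intro i _; simp
    have card1 : (Finset.univ.filter fun i => (a + b) i ≠ 0).card ≤ s + s' := by
      calc (Finset.univ.filter fun i => a i + b i ≠ 0).card ≤ _ := hsupp a b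
      _ ≤ s + s' := add_le_add has hbs
    have card2 : (Finset.univ.filter fun i => (a - b) i ≠ 0).card ≤ s + s' := by
      have : (Finset.univ.filter fun i => a i - b i ≠ 0).card ≤
          (Finset.univ.filter fun i => a i ≠ 0).card +
          (Finset.univ.filter fun i => -b i ≠ 0).card := by
        have := hsupp a (-b)
        simpa [sub_eq_add_neg] using this
      rw [hnegb] at this
      exact le_trans this (add_le_add has hbs)
    have h1 := hQ (a + b) card1
    have h2 := hQ (a - b) card2
    have hsum : (∑ i, (a + b) i ^ 2) + (∑ i, (a - b) i ^ 2) =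
        2 * (∑ i, a i ^ 2) + 2 * (∑ i, b i ^ 2) := by
      rw [← Finset.sum_add_distrib, Finset.mul_sum, Finset.mul_sum, ← Finset.sum_add_distrib]
      exact Finset.sum_congr rfl fun i _ => by simp [Pi.add_apply, Pi.sub_apply]; ring
    have hexp : (a + b) ⬝ᵥ E.mulVec (a + b) - (a - b) ⬝ᵥ E.mulVec (a - b) =
        4 * (a ⬝ᵥ E.mulVec b) := by
      have hs := hsymm a b
      simp only [Matrix.mulVec_add, Matrix.mulVec_sub, add_dotProduct,
        sub_dotProduct, dotProduct_add, dotProduct_sub]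
      linarith
    have h4 : |4 * (a ⬝ᵥ E.mulVec b)| ≤ ε * 4 := by
      rw [← hexp]
      calc |(a + b) ⬝ᵥ E.mulVec (a + b) - (a - b) ⬝ᵥ E.mulVec (a - b)|
          ≤ |(a + b) ⬝ᵥ E.mulVec (a + b)| + |(a - b) ⬝ᵥ E.mulVec (a - b)| := abs_sub _ _
      _ ≤ ε * (∑ i, (a + b) i ^ 2) + ε * (∑ i, (a - b) i ^ 2) := add_le_add h1 h2
      _ ≤ ε * 4 := by nlinarith [hsum, ha2, hb2, hε]
    rw [abs_mul] at h4
    have : |(4:ℝ)| = 4 := by norm_num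
    rw [this] at h4
    linarith
  -- extend to closure of convex hulls by bilinearity
  have contL : ∀ b : Fin p → ℝ, Continuous (fun a : Fin p → ℝ => a ⬝ᵥ E.mulVec b) := by
    intro b
    exact LinearMap.continuous_of_finiteDimensional
      ({ toFun := fun a => a ⬝ᵥ E.mulVec b,
         map_add' := fun x y => add_dotProduct _ _ _,
         map_smul' := fun c y => by simp [smul_dotProduct, smul_eq_mul] } :
        (Fin p → ℝ) →ₗ[ℝ] ℝ)
  have contR : ∀ a : Fin p → ℝ, Continuous (fun b : Fin p → ℝ => a ⬝ᵥ E.mulVec b) := by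
    intro a
    exact LinearMap.continuous_of_finiteDimensional
      ({ toFun := fun b => a ⬝ᵥ E.mulVec b,
         map_add' := fun y z => by simp [Matrix.mulVec_add, dotProduct_add],
         map_smul' := fun c y => by
           simp [Matrix.mulVec_smul, dotProduct_smul, smul_eq_mul] } :
        (Fin p → ℝ) →ₗ[ℝ] ℝ)
  have step1 : ∀ b : Fin p → ℝ,
      (Finset.univ.filter fun i => b i ≠ 0).card ≤ s' → Real.sqrt (∑ i, b i ^ 2) ≤ 1 →
      ∀ a ∈ closure (convexHull ℝ {v : Fin p → ℝ |
        (Finset.univ.filter fun i => v i ≠ 0).card ≤ s ∧ Real.sqrt (∑ i, v i ^ 2) ≤ 1}),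
      |a ⬝ᵥ E.mulVec b| ≤ ε := by
    intro b hbs hbn a ha
    have hsub : closure (convexHull ℝ {v : Fin p → ℝ |
        (Finset.univ.filter fun i => v i ≠ 0).card ≤ s ∧ Real.sqrt (∑ i, v i ^ 2) ≤ 1}) ⊆
        (fun a : Fin p → ℝ => a ⬝ᵥ E.mulVec b) ⁻¹' Set.Icc (-ε) ε := by
      apply closure_minimal
      · apply convexHull_min
        · intro a' ha'
          simp only [Set.mem_preimage, Set.mem_Icc, ← abs_le]
          exact hpair a' b ha'.1 ha'.2 hbs hbn
        · exact (convex_Icc _ _).linear_preimage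
            ({ toFun := fun a => a ⬝ᵥ E.mulVec b,
               map_add' := fun x y => add_dotProduct _ _ _,
               map_smul' := fun c y => by simp [smul_dotProduct, smul_eq_mul] } :
              (Fin p → ℝ) →ₗ[ℝ] ℝ)
      · exact isClosed_Icc.preimage (contL b)
    have := hsub ha
    rw [Set.mem_preimage, Set.mem_Icc] at this
    exact abs_le.mpr this
  have step2 : ∀ a ∈ closure (convexHull ℝ {v : Fin p → ℝ |
        (Finset.univ.filter fun i => v i ≠ 0).card ≤ s ∧ Real.sqrt (∑ i, v i ^ 2) ≤ 1}),
      ∀ b ∈ closure (convexHull ℝ {w : Fin p → ℝ |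
        (Finset.univ.filter fun i => w i ≠ 0).card ≤ s' ∧ Real.sqrt (∑ i, w i ^ 2) ≤ 1}),
      |a ⬝ᵥ E.mulVec b| ≤ ε := by
    intro a ha b hb
    have hsub : closure (convexHull ℝ {w : Fin p → ℝ |
        (Finset.univ.filter fun i => w i ≠ 0).card ≤ s' ∧ Real.sqrt (∑ i, w i ^ 2) ≤ 1}) ⊆
        (fun b : Fin p → ℝ => a ⬝ᵥ E.mulVec b) ⁻¹' Set.Icc (-ε) ε := by
      apply closure_minimal
      · apply convexHull_min
        · intro b' hb'
          simp only [Set.mem_preimage, Set.mem_Icc, ← abs_le]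
          exact step1 b' hb'.1 hb'.2 a ha
        · exact (convex_Icc _ _).linear_preimage
            ({ toFun := fun b => a ⬝ᵥ E.mulVec b,
               map_add' := fun y z => by simp [Matrix.mulVec_add, dotProduct_add],
               map_smul' := fun c y => by
                 simp [Matrix.mulVec_smul, dotProduct_smul, smul_eq_mul] } :
              (Fin p → ℝ) →ₗ[ℝ] ℝ)
      · exact isClosed_Icc.preimage (contR a)
    have := hsub hb
    rw [Set.mem_preimage, Set.mem_Icc] at this
    exact abs_le.mpr this
  intro u v hu1 hu2 hv1 hv2
  obtain ⟨a, ha, rfl⟩ := Set.mem_smul_set.mp (hconv u hu1 hu2)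
  obtain ⟨b, hb, rfl⟩ := Set.mem_smul_set.mp (hconv' v hv1 hv2)
  have hab := step2 a ha b hb
  have hrw : ((3:ℝ) • a) ⬝ᵥ E.mulVec ((3:ℝ) • b) = 9 * (a ⬝ᵥ E.mulVec b) := by
    simp [smul_dotProduct, Matrix.mulVec_smul, dotProduct_smul, smul_eq_mul]
    ring
  rw [hrw, abs_mul]
  have : |(9:ℝ)| = 9 := by norm_num
  rw [this]
  linarith
end
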